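/- arXiv:1305.5530 — 8 statements merged into one kernel-verified Lean document; each statement's English description precedes it below -/
import Mathlib

section
/- If λ_j ≥ 0, μ_j ≥ 0, ν_j ≥ 0, ρ1_i ≥ 0, ρ2_i ≥ 0 for all indices, powers p^sc_i, p^b_i ≥ 0 satisfy the stationarity condition 1/(1 + p^sc_i + p^b_i) = (∑_{j=i}^N ν_j) − ρ2_i for each i, and p^b_i > 0 (so that complementary slackness ρ2_i · p^b_i = 0 forces ρ2_i = 0), then p^sc_i + p^b_i ≤ p^sc_{i+1} + p^b_{i+1}. -/
/-- Lemma 1 of the paper: if the battery is used in epoch `i` (`pb i > 0`),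
then the total power does not decrease from epoch `i` to epoch `i+1`. -/
theorem stmt0 (N : ℕ) (hN : 2 ≤ N) (i : ℕ) (hi1 : 1 ≤ i) (hiN : i ≤ N - 1)
    (psc pb ν ρ2 : ℕ → ℝ)
    (hpsc : ∀ j, 0 ≤ psc j) (hpb : ∀ j, 0 ≤ pb j)
    (hν : ∀ j, 0 ≤ ν j) (hρ2 : ∀ j, 0 ≤ ρ2 j)
    (hpos : ∀ j, 0 < 1 + psc j + pb j)
    (hstat : ∀ j, 1 ≤ j → j ≤ N →
      1 / (1 + psc j + pb j) = (∑ k ∈ Finset.Icc j N, ν k) - ρ2 j)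
    (hpbi : 0 < pb i)
    (hslack : ρ2 i * pb i = 0) :
    psc i + pb i ≤ psc (i + 1) + pb (i + 1) := by
  have hρ2i : ρ2 i = 0 := by
    rcases mul_eq_zero.mp hslack with h | h
    · exact h
    · exact absurd h (ne_of_gt hpbi)
  have hiN' : i ≤ N := le_trans hiN (Nat.sub_le N 1)
  have hi1N : i + 1 ≤ N := by omega
  have h1 := hstat i hi1 hiN'
  have h2 := hstat (i + 1) (by omega) hi1N
  rw [hρ2i, sub_zero] at h1
  have hsub : Finset.Icc (i+1) N ⊆ Finset.Icc i N := by
    intro x hx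
    simp only [Finset.mem_Icc] at *
    omega
  have hsum : (∑ k ∈ Finset.Icc (i+1) N, ν k) ≤ ∑ k ∈ Finset.Icc i N, ν k :=
    Finset.sum_le_sum_of_subset_of_nonneg hsub (fun j _ _ => hν j)
  have key : 1 / (1 + psc (i+1) + pb (i+1)) ≤ 1 / (1 + psc i + pb i) := by
    rw [h1, h2]
    have := hρ2 (i+1)
    linarith
  have h3 := hpos i
  have h4 := hpos (i+1)
  rw [div_le_div_iff₀ h4 h3] at key
  linarith
end

section
/- Suppose real multipliers λ_j, μ_j, ν_j ≥ 0 and γ_i, δ_i ≥ 0 satisfy: (a) 1/(1+p^sc_i+p^b_i) = ∑_{j=i}^N λ_j − ∑_{j=i}^{N−1} μ_j (stationarity with ρ1_i = 0, valid since p^sc_i > 0), (b) 1/(1+p^sc_i+p^b_i) = ∑_{j=i}^N ν_j (stationarity with ρ2_i = 0, valid since p^b_i > 0), (c) ∑_{j=i}^N λ_j − ∑_{j=i}^{N−1} μ_j − η∑_{j=i+1}^N ν_j − γ_i = 0, and (d) γ_i δ_i = 0 (complementary slackness), where 0 ≤ η < 1. If additionally 1 + p^sc_i + p^b_i > 0 and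 ν_j ≥ 0 with ν_i + ∑_{j=i+1}^N ν_j > 0, then γ_i = ν_i + (1−η)∑_{j=i+1}^N ν_j > 0 and consequently δ_i = 0. -/
/-- Lemma 3 of the paper: if both the SC and the battery are drained in epoch `i`,
then `γ i = ν i + (1-η) ∑_{j=i+1}^N ν j > 0` and hence no SC-to-battery transfer
occurs in epoch `i` (`δ i = 0`). -/
theorem stmt2 (N : ℕ) (hN : 2 ≤ N) (i : ℕ) (hi1 : 1 ≤ i) (hiN : i ≤ N - 1)
    (η : ℝ) (hη0 : 0 ≤ η) (hη1 : η < 1)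
    (psc pb : ℝ) (hpsc : 0 < psc) (hpb : 0 < pb)
    (lam μ ν : ℕ → ℝ) (γ δ : ℝ)
    (hlam : ∀ j, 0 ≤ lam j) (hμ : ∀ j, 0 ≤ μ j) (hν : ∀ j, 0 ≤ ν j)
    (hγ : 0 ≤ γ) (hδ : 0 ≤ δ)
    (hpos : 0 < 1 + psc + pb)
    (ha : 1 / (1 + psc + pb)
      = (∑ j ∈ Finset.Icc i N, lam j) - ∑ j ∈ Finset.Icc i (N - 1), μ j)
    (hb : 1 / (1 + psc + pb) = ∑ j ∈ Finset.Icc i N, ν j)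
    (hc : (∑ j ∈ Finset.Icc i N, lam j) - (∑ j ∈ Finset.Icc i (N - 1), μ j)
      - η * (∑ j ∈ Finset.Icc (i + 1) N, ν j) - γ = 0)
    (hd : γ * δ = 0)
    (hνpos : 0 < ν i + ∑ j ∈ Finset.Icc (i + 1) N, ν j) :
    γ = ν i + (1 - η) * (∑ j ∈ Finset.Icc (i + 1) N, ν j) ∧ 0 < γ ∧ δ = 0 := by

  have hiN' : i ≤ N := le_trans hiN (Nat.sub_le N 1)
  have hsplit : (∑ j ∈ Finset.Icc i N, ν j)
      = ν i + ∑ j ∈ Finset.Icc (i + 1) N, ν j := by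
    have : Finset.Icc i N = insert i (Finset.Icc (i + 1) N) := by
      ext x; simp [Finset.mem_Icc, Finset.mem_insert]; omega
    rw [this, Finset.sum_insert (by simp [Finset.mem_Icc])]
  have hγeq : γ = ν i + (1 - η) * (∑ j ∈ Finset.Icc (i + 1) N, ν j) := by
    have := ha.symm.trans hb
    nlinarith [hsplit]
  have htail : 0 ≤ ∑ j ∈ Finset.Icc (i + 1) N, ν j :=
    Finset.sum_nonneg fun j _ => hν j
  have hγpos : 0 < γ := by
    rcases lt_or_eq_of_le (hν i) with h | h
    · nlinarith
    · nlinarith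
  exact ⟨hγeq, hγpos, by
    rcases mul_eq_zero.mp hd with h | h
    · exact absurd h (ne_of_gt hγpos)
    · exact h⟩
end

section
/- Suppose multipliers λ_j, μ_j, ν_j ≥ 0 satisfy the stationarity conditions 1/(1+p^sc_j+p^b_j) = ∑_{k=j}^N λ_k − ∑_{k=j}^{N−1} μ_k − ρ1_j and 1/(1+p^sc_j+p^b_j) = ∑_{k=j}^N ν_k − ρ2_j with ρ1_j, ρ2_j ≥ 0, and the transfer condition ∑_{k=i}^N λ_k − ∑_{k=i}^{N−1} μ_k − η ∑_{k=i+1}^N ν_k − γ_i = 0 with complementary slackness γ_i δ_i = 0 and δ_i ≥ 0, where 0 ≤ η < 1. If p^sc_i > 0, p^sc_{i+1} > 0, p^b_{i+1} > 0 (so ρ1_i = ρ1_{i+1} = ρ2_{i+1} = 0), p^sc_i + p^b_i ≤ p^sc_{i+1} + p^b_{i+1}, and all quantities 1 + p^sc_j + p^b_j are positive, then γ_i > 0 and hence δ_i = 0. -/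
/-- Lemma 4 of the paper: if the SC is used in epochs `i` and `i+1`, the battery
is used in epoch `i+1`, and the total power is nondecreasing from `i` to `i+1`,
then `γ i > 0` and hence `δ i = 0`. -/
theorem stmt3 (N : ℕ) (hN : 2 ≤ N) (i : ℕ) (hi1 : 1 ≤ i) (hiN : i ≤ N - 1)
    (η : ℝ) (hη0 : 0 ≤ η) (hη1 : η < 1)
    (psc pb : ℕ → ℝ) (hpsc : ∀ j, 0 ≤ psc j) (hpb : ∀ j, 0 ≤ pb j)
    (lam μ ν ρ1 ρ2 : ℕ → ℝ) (γ δ : ℝ)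
    (hlam : ∀ j, 0 ≤ lam j) (hμ : ∀ j, 0 ≤ μ j) (hν : ∀ j, 0 ≤ ν j)
    (hρ1 : ∀ j, 0 ≤ ρ1 j) (hρ2 : ∀ j, 0 ≤ ρ2 j) (hδ : 0 ≤ δ)
    (hpos : ∀ j, 0 < 1 + psc j + pb j)
    (hstat1 : ∀ j, 1 ≤ j → j ≤ N → 1 / (1 + psc j + pb j)
      = (∑ k ∈ Finset.Icc j N, lam k) - (∑ k ∈ Finset.Icc j (N - 1), μ k) - ρ1 j)
    (hstat2 : ∀ j, 1 ≤ j → j ≤ N →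
      1 / (1 + psc j + pb j) = (∑ k ∈ Finset.Icc j N, ν k) - ρ2 j)
    (htrans : (∑ k ∈ Finset.Icc i N, lam k) - (∑ k ∈ Finset.Icc i (N - 1), μ k)
      - η * (∑ k ∈ Finset.Icc (i + 1) N, ν k) - γ = 0)
    (hslack : γ * δ = 0)
    (hρ1i : ρ1 i = 0) (hρ1i1 : ρ1 (i + 1) = 0) (hρ2i1 : ρ2 (i + 1) = 0)
    (hpsci : 0 < psc i) (hpsci1 : 0 < psc (i + 1)) (hpbi1 : 0 < pb (i + 1))
    (hmono : psc i + pb i ≤ psc (i + 1) + pb (i + 1))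
    (hνtail : 0 < ∑ k ∈ Finset.Icc (i + 1) N, ν k) :
    0 < γ ∧ δ = 0 := by
  have hiN' : i ≤ N := le_trans hiN (Nat.sub_le N 1)
  have hi1N : i + 1 ≤ N := by omega
  have h1 := hstat1 i hi1 hiN'
  have h2 := hstat2 (i + 1) (by omega) hi1N
  rw [hρ1i] at h1
  rw [hρ2i1] at h2
  -- γ = 1/(1+p_i) − η * T
  have hγ : γ = 1 / (1 + psc i + pb i) - η * (∑ k ∈ Finset.Icc (i + 1) N, ν k) := by
    rw [h1]; linarith [htrans]
  have hT : 1 / (1 + psc (i + 1) + pb (i + 1)) = ∑ k ∈ Finset.Icc (i + 1) N, ν k := by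
    linarith [h2]
  have hfrac : 1 / (1 + psc (i + 1) + pb (i + 1)) ≤ 1 / (1 + psc i + pb i) :=
    one_div_le_one_div_of_le (hpos i) (by linarith)
  have hγpos : 0 < γ := by
    have : (1 - η) * (∑ k ∈ Finset.Icc (i + 1) N, ν k) ≤ γ := by
      rw [hγ, ← hT]; nlinarith
    nlinarith
  refine ⟨hγpos, ?_⟩
  rcases mul_eq_zero.mp hslack with h | h
  · exact absurd h (ne_of_gt hγpos)
  · exact h
end

section
/- When the battery is perfectly efficient (η = 1) and the super-capacitor capacity constraint is dropped, the hybrid-storage problem reduces to a single-battery problem: the maximum of ∑_{i=1}^N (ℓ_i/2)·log(1 + p^sc_i + p^b_i) over nonnegative (p^sc, p^b, δ) satisfying ∑_{j=1}^i (p^sc_j + δ_j)ℓ_j ≤ ∑_{j=0}^{i−1} E^sc_j and ∑_{j=1}^i p^b_j ℓ_j ≤ ∑_{j=0}^{i−1} (E^b_j + δ_j ℓ_j) for all i equals the maximum of ∑_{i=1}^N (ℓ_i/2)·log(1 + p_i) over nonnegative p satisfying ∑_{j=1}^i p_j ℓ_j ≤ ∑_{j=0}^{i−1} (E^sc_j +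 E^b_j) for all i. -/
/-- With a perfectly efficient battery (`η = 1`) and no SC capacity constraint,
the hybrid-storage problem has the same optimal value as the single-battery
problem with aggregate arrivals `E^sc_j + E^b_j`. -/
theorem stmt10 (N : ℕ) (hN : 1 ≤ N) (ℓ : ℕ → ℝ) (hℓ : ∀ j ∈ Finset.Icc 1 N, 0 < ℓ j)
    (Esc Eb : ℕ → ℝ) (hEsc : ∀ j, 0 ≤ Esc j) (hEb : ∀ j, 0 ≤ Eb j) :
    sSup {v : ℝ | ∃ psc pb δ : ℕ → ℝ,
        (∀ j, 0 ≤ psc j) ∧ (∀ j, 0 ≤ pb j) ∧ (∀ j, 0 ≤ δ j) ∧ δ 0 = 0 ∧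
        (∀ i ∈ Finset.Icc 1 N,
          (∑ j ∈ Finset.Icc 1 i, (psc j + δ j) * ℓ j)
            ≤ ∑ j ∈ Finset.range i, Esc j) ∧
        (∀ i ∈ Finset.Icc 1 N,
          (∑ j ∈ Finset.Icc 1 i, pb j * ℓ j)
            ≤ ∑ j ∈ Finset.range i, (Eb j + δ j * ℓ j)) ∧
        v = ∑ i ∈ Finset.Icc 1 N, (ℓ i / 2) * Real.log (1 + psc i + pb i)}
      = sSup {v : ℝ | ∃ p : ℕ → ℝ, (∀ j, 0 ≤ p j) ∧
        (∀ i ∈ Finset.Icc 1 N,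
          (∑ j ∈ Finset.Icc 1 i, p j * ℓ j)
            ≤ ∑ j ∈ Finset.range i, (Esc j + Eb j)) ∧
        v = ∑ i ∈ Finset.Icc 1 N, (ℓ i / 2) * Real.log (1 + p i)} := by
  congr 1
  ext v
  constructor
  · rintro ⟨psc, pb, δ, hpsc, hpb, hδ, hδ0, h1, h2, hv⟩
    refine ⟨fun j => psc j + pb j, fun j => add_nonneg (hpsc j) (hpb j), ?_, ?_⟩
    · intro i hi
      obtain ⟨hi1, hiN⟩ := Finset.mem_Icc.mp hi
      have e1 := h1 i hi
      have e2 := h2 i hi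
      -- δ-sum over range i is bounded by δ-sum over Icc 1 i
      have hsub : ∑ j ∈ Finset.range i, δ j * ℓ j ≤ ∑ j ∈ Finset.Icc 1 i, δ j * ℓ j := by
        have hss : Finset.range i ⊆ insert 0 (Finset.Icc 1 i) := by
          intro j hj
          rcases Nat.eq_zero_or_pos j with h0 | h0
          · simp [h0]
          · simp only [Finset.mem_insert, Finset.mem_Icc]
            exact Or.inr ⟨h0, le_of_lt (Finset.mem_range.mp hj)⟩
        have hnn : ∀ j ∈ insert 0 (Finset.Icc 1 i), j ∉ Finset.range i → 0 ≤ δ j * ℓ j := by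
          intro j hj _
          rcases Finset.mem_insert.mp hj with h0 | hj'
          · simp [h0, hδ0]
          · obtain ⟨hj1, hji⟩ := Finset.mem_Icc.mp hj'
            exact mul_nonneg (hδ j) (hℓ j (Finset.mem_Icc.mpr ⟨hj1, le_trans hji hiN⟩)).le
        calc ∑ j ∈ Finset.range i, δ j * ℓ j
            ≤ ∑ j ∈ insert 0 (Finset.Icc 1 i), δ j * ℓ j :=
              Finset.sum_le_sum_of_subset_of_nonneg hss hnn
          _ = ∑ j ∈ Finset.Icc 1 i, δ j * ℓ j := by
              rw [Finset.sum_insert (by simp)]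
              simp [hδ0]
      have key : ∑ j ∈ Finset.Icc 1 i, (psc j + pb j) * ℓ j + ∑ j ∈ Finset.Icc 1 i, δ j * ℓ j
          = ∑ j ∈ Finset.Icc 1 i, (psc j + δ j) * ℓ j + ∑ j ∈ Finset.Icc 1 i, pb j * ℓ j := by
        rw [← Finset.sum_add_distrib, ← Finset.sum_add_distrib]
        exact Finset.sum_congr rfl fun j _ => by ring
      have hrng : ∑ j ∈ Finset.range i, (Eb j + δ j * ℓ j)
          = ∑ j ∈ Finset.range i, Eb j + ∑ j ∈ Finset.range i, δ j * ℓ j :=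
        Finset.sum_add_distrib
      have hagg : ∑ j ∈ Finset.range i, (Esc j + Eb j)
          = ∑ j ∈ Finset.range i, Esc j + ∑ j ∈ Finset.range i, Eb j :=
        Finset.sum_add_distrib
      rw [hrng] at e2
      rw [hagg]
      linarith
    · rw [hv]
      exact Finset.sum_congr rfl fun i _ => by rw [add_assoc]
  · rintro ⟨p, hp, hc, hv⟩
    -- greedy split of p into SC part and battery part
    set A : ℕ → ℝ := fun i => ∑ j ∈ Finset.range i, Esc j with hA
    set B : ℕ → ℝ := fun i => ∑ j ∈ Finset.range i, Eb j with hB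
    set s : ℕ → ℝ := fun n =>
      Nat.rec (0 : ℝ) (fun i si => min (si + p (i + 1) * ℓ (i + 1)) (A (i + 1))) n with hs
    have hs0 : s 0 = 0 := rfl
    have hssucc : ∀ i, s (i + 1) = min (s i + p (i + 1) * ℓ (i + 1)) (A (i + 1)) :=
      fun i => rfl
    have hAnn : ∀ i, 0 ≤ A i := fun i => Finset.sum_nonneg fun j _ => hEsc j
    have hAmono : ∀ i, A i ≤ A (i + 1) := by
      intro i
      simp only [hA, Finset.sum_range_succ]
      linarith [hEsc i]
    have hsA : ∀ i, s i ≤ A i := by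
      intro i
      cases i with
      | zero => simp [hs0, hA]
      | succ k => rw [hssucc]; exact min_le_right _ _
    have hsmono : ∀ k, k + 1 ≤ N → s k ≤ s (k + 1) := by
      intro k hk
      rw [hssucc]
      refine le_min ?_ (le_trans (hsA k) (hAmono k))
      have hℓk := hℓ (k + 1) (Finset.mem_Icc.mpr ⟨Nat.le_add_left 1 k, hk⟩)
      nlinarith [hp (k + 1)]
    have hdiff : ∀ k, s (k + 1) - s k ≤ p (k + 1) * ℓ (k + 1) := by
      intro k
      have := min_le_left (s k + p (k + 1) * ℓ (k + 1)) (A (k + 1))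
      rw [← hssucc] at this
      linarith
    -- lower bound on s
    have hlow : ∀ i, i ≤ N → (∑ j ∈ Finset.Icc 1 i, p j * ℓ j) - B i ≤ s i := by
      intro i
      induction i with
      | zero => intro _; simp [hs0, hB]
      | succ k ih =>
        intro hk
        have hk' : k ≤ N := Nat.le_of_succ_le hk
        have ihk := ih hk'
        have hBmono : B k ≤ B (k + 1) := by
          simp only [hB, Finset.sum_range_succ]
          linarith [hEb k]
        have hcon := hc (k + 1) (Finset.mem_Icc.mpr ⟨Nat.le_add_left 1 k, hk⟩)
        have hsplit : ∑ j ∈ Finset.range (k + 1), (Esc j + Eb j) = A (k + 1) + B (k + 1) := by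
          simp only [hA, hB, ← Finset.sum_add_distrib]
        rw [hsplit] at hcon
        have htop : ∑ j ∈ Finset.Icc 1 (k + 1), p j * ℓ j
            = ∑ j ∈ Finset.Icc 1 k, p j * ℓ j + p (k + 1) * ℓ (k + 1) :=
          Finset.sum_Icc_succ_top (Nat.le_add_left 1 k) _
        rw [hssucc, le_min_iff]
        constructor
        · rw [htop]; linarith
        · linarith
    -- the split
    set psc : ℕ → ℝ := fun j =>
      if j ∈ Finset.Icc 1 N then (s j - s (j - 1)) / ℓ j else p j with hpscdef
    set pb : ℕ → ℝ := fun j => p j - psc j with hpbdef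
    have hpscnn : ∀ j, 0 ≤ psc j := by
      intro j
      simp only [hpscdef]
      split_ifs with hj
      · obtain ⟨hj1, hjN⟩ := Finset.mem_Icc.mp hj
        obtain ⟨k, rfl⟩ := Nat.exists_eq_add_of_le hj1
        have : s k ≤ s (k + 1) := hsmono k (by omega)
        have hℓj := hℓ (1 + k) hj
        apply div_nonneg _ hℓj.le
        simp only [Nat.add_sub_cancel_left] at *
        have h1k : 1 + k = k + 1 := by omega
        rw [h1k] at *
        linarith
      · exact hp j
    have hpbnn : ∀ j, 0 ≤ pb j := by
      intro j
      simp only [hpbdef, hpscdef]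
      split_ifs with hj
      · obtain ⟨hj1, hjN⟩ := Finset.mem_Icc.mp hj
        obtain ⟨k, rfl⟩ := Nat.exists_eq_add_of_le hj1
        have hℓj := hℓ (1 + k) hj
        have h1k : 1 + k = k + 1 := by omega
        rw [h1k] at *
        simp only [Nat.add_sub_cancel] at *
        have hℓj' : 0 < ℓ (k + 1) := by rw [show k + 1 = 1 + k from by omega]; exact hℓj
        rw [sub_nonneg, div_le_iff₀ hℓj']
        exact hdiff k
      · simp
    -- partial sums of psc telescope to s
    have hsum : ∀ i, i ≤ N → ∑ j ∈ Finset.Icc 1 i, psc j * ℓ j = s i := by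
      intro i
      induction i with
      | zero => intro _; simp [hs0]
      | succ k ih =>
        intro hk
        have hk' : k ≤ N := Nat.le_of_succ_le hk
        rw [Finset.sum_Icc_succ_top (Nat.le_add_left 1 k), ih hk']
        have hmem : k + 1 ∈ Finset.Icc 1 N := Finset.mem_Icc.mpr ⟨Nat.le_add_left 1 k, hk⟩
        have hℓk := hℓ (k + 1) hmem
        simp only [hpscdef, if_pos hmem, Nat.add_sub_cancel]
        rw [div_mul_cancel₀ _ hℓk.ne']
        ring
    refine ⟨psc, pb, fun _ => 0, hpscnn, hpbnn, fun _ => le_refl 0, rfl, ?_, ?_, ?_⟩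
    · intro i hi
      obtain ⟨hi1, hiN⟩ := Finset.mem_Icc.mp hi
      have : ∑ j ∈ Finset.Icc 1 i, (psc j + 0) * ℓ j = ∑ j ∈ Finset.Icc 1 i, psc j * ℓ j := by
        simp
      rw [this, hsum i hiN]
      exact hsA i
    · intro i hi
      obtain ⟨hi1, hiN⟩ := Finset.mem_Icc.mp hi
      have hP : ∑ j ∈ Finset.Icc 1 i, pb j * ℓ j
          = ∑ j ∈ Finset.Icc 1 i, p j * ℓ j - ∑ j ∈ Finset.Icc 1 i, psc j * ℓ j := by
        rw [← Finset.sum_sub_distrib]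
        exact Finset.sum_congr rfl fun j _ => by simp only [hpbdef]; ring
      have hR : ∑ j ∈ Finset.range i, (Eb j + (0 : ℝ) * ℓ j) = B i := by
        simp [hB]
      rw [hP, hR, hsum i hiN]
      linarith [hlow i hiN]
    · rw [hv]
      refine Finset.sum_congr rfl fun i _ => ?_
      have : 1 + psc i + pb i = 1 + p i := by simp only [hpbdef]; ring
      rw [this]
end

section
/- Monotonicity of water levels under energy causality: let p* be the maximizer of ∑_{i=1}^N (ℓ_i/2)·log(1+p_i) over p ≥ 0 with ∑_{j=1}^i p_j ℓ_j ≤ ∑_{j=0}^{i−1} E_j for all i, where all E_j ≥ 0. Then p*_1 ≤ p*_2 ≤ … ≤ p*_N, i.e., the optimal power sequence is nondecreasing. -/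
/-- Directional water-filling monotonicity: in the single-user unlimited-battery
problem, any optimal power sequence is nondecreasing. -/
theorem stmt11 (N : ℕ) (hN : 1 ≤ N) (ℓ : ℕ → ℝ) (hℓ : ∀ i ∈ Finset.Icc 1 N, 0 < ℓ i)
    (E : ℕ → ℝ) (hE : ∀ j, 0 ≤ E j)
    (p : ℕ → ℝ) (hp : ∀ i ∈ Finset.Icc 1 N, 0 ≤ p i)
    (hfeas : ∀ i ∈ Finset.Icc 1 N,
      (∑ j ∈ Finset.Icc 1 i, p j * ℓ j) ≤ ∑ j ∈ Finset.range i, E j)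
    (hopt : ∀ q : ℕ → ℝ, (∀ i ∈ Finset.Icc 1 N, 0 ≤ q i) →
      (∀ i ∈ Finset.Icc 1 N,
        (∑ j ∈ Finset.Icc 1 i, q j * ℓ j) ≤ ∑ j ∈ Finset.range i, E j) →
      (∑ i ∈ Finset.Icc 1 N, (ℓ i / 2) * Real.log (1 + q i))
        ≤ ∑ i ∈ Finset.Icc 1 N, (ℓ i / 2) * Real.log (1 + p i)) :
    ∀ i, 1 ≤ i → i + 1 ≤ N → p i ≤ p (i + 1) := by
  intro i hi1 hiN
  by_contra hcon
  push_neg at hcon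
  -- memberships
  have hiI : i ∈ Finset.Icc 1 N := Finset.mem_Icc.2 ⟨hi1, le_trans (Nat.le_succ i) hiN⟩
  have hi1I : i + 1 ∈ Finset.Icc 1 N := Finset.mem_Icc.2 ⟨le_trans hi1 (Nat.le_succ i), hiN⟩
  have hℓi : 0 < ℓ i := hℓ i hiI
  have hℓi1 : 0 < ℓ (i + 1) := hℓ (i + 1) hi1I
  have hpi : 0 ≤ p i := hp i hiI
  have hpi1 : 0 ≤ p (i + 1) := hp (i + 1) hi1I
  set s : ℝ := ℓ i + ℓ (i + 1) with hs
  have hspos : 0 < s := by positivity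
  set w : ℝ := (p i * ℓ i + p (i + 1) * ℓ (i + 1)) / s with hw
  have hw_lt : w < p i := by
    rw [hw, div_lt_iff₀ hspos]; nlinarith
  have hw_gt : p (i + 1) < w := by
    rw [hw, lt_div_iff₀ hspos]; nlinarith
  have hw0 : 0 ≤ w := le_of_lt (lt_of_le_of_lt hpi1 hw_gt)
  set q : ℕ → ℝ := fun j => if j = i ∨ j = i + 1 then w else p j with hq
  have hqi : q i = w := by simp [hq]
  have hqi1 : q (i + 1) = w := by simp [hq]
  have hqother : ∀ j, j ≠ i → j ≠ i + 1 → q j = p j := by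
    intro j h1 h2; simp [hq, h1, h2]
  have hq0 : ∀ j ∈ Finset.Icc 1 N, 0 ≤ q j := by
    intro j hj
    by_cases h : j = i ∨ j = i + 1
    · simp [hq, h, hw0]
    · push_neg at h
      rw [hqother j h.1 h.2]; exact hp j hj
  -- energy balance at the pair
  have hbal : q i * ℓ i + q (i + 1) * ℓ (i + 1) = p i * ℓ i + p (i + 1) * ℓ (i + 1) := by
    rw [hqi, hqi1, hw]; field_simp; ring
  -- feasibility of q
  have hqfeas : ∀ k ∈ Finset.Icc 1 N,
      (∑ j ∈ Finset.Icc 1 k, q j * ℓ j) ≤ ∑ j ∈ Finset.range k, E j := by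
    intro k hk
    rcases lt_or_ge k i with hki | hki
    · have : (∑ j ∈ Finset.Icc 1 k, q j * ℓ j) = ∑ j ∈ Finset.Icc 1 k, p j * ℓ j := by
        apply Finset.sum_congr rfl
        intro j hj
        have hjk : j ≤ k := (Finset.mem_Icc.1 hj).2
        have h1 : j ≠ i := by omega
        have h2 : j ≠ i + 1 := by omega
        rw [hqother j h1 h2]
      rw [this]; exact hfeas k hk
    rcases eq_or_lt_of_le hki with rfl | hki'
    · -- k = i : sum decreased
      have key : (∑ j ∈ Finset.Icc 1 i, q j * ℓ j)
          = (∑ j ∈ Finset.Icc 1 i, p j * ℓ j) + (w - p i) * ℓ i := by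
        have hde : ∀ j ∈ Finset.Icc 1 i, q j * ℓ j = p j * ℓ j + (if j = i then (w - p i) * ℓ i else 0) := by
          intro j hj
          have hjk : j ≤ i := (Finset.mem_Icc.1 hj).2
          by_cases hjeq : j = i
          · subst hjeq; rw [hqi, if_pos rfl]; ring
          · have h2 : j ≠ i + 1 := by omega
            rw [hqother j hjeq h2]; simp [hjeq]
        rw [Finset.sum_congr rfl hde, Finset.sum_add_distrib, Finset.sum_ite_eq' (Finset.Icc 1 i) i,
          if_pos (Finset.mem_Icc.2 ⟨hi1, le_refl i⟩)]
      rw [key]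
      have hdec : (w - p i) * ℓ i ≤ 0 := by nlinarith
      have := hfeas i hk
      linarith
    · -- k ≥ i+1 : sum unchanged
      have hik : i + 1 ≤ k := hki'
      have key : (∑ j ∈ Finset.Icc 1 k, q j * ℓ j) = ∑ j ∈ Finset.Icc 1 k, p j * ℓ j := by
        have hsub : ({i, i + 1} : Finset ℕ) ⊆ Finset.Icc 1 k := by
          intro j hj
          simp only [Finset.mem_insert, Finset.mem_singleton] at hj
          rcases hj with h | h <;> subst h <;> simp [Finset.mem_Icc] <;> omega
        have h0 : ∀ j ∈ Finset.Icc 1 k, j ∉ ({i, i + 1} : Finset ℕ) →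
            q j * ℓ j - p j * ℓ j = 0 := by
          intro j _ hj
          simp only [Finset.mem_insert, Finset.mem_singleton, not_or] at hj
          rw [hqother j hj.1 hj.2]; ring
        have := Finset.sum_subset hsub h0
        have hpair : (∑ j ∈ ({i, i + 1} : Finset ℕ), (q j * ℓ j - p j * ℓ j)) = 0 := by
          rw [Finset.sum_pair (by omega : i ≠ i + 1)]
          linarith [hbal]
        have hdiff : (∑ j ∈ Finset.Icc 1 k, (q j * ℓ j - p j * ℓ j)) = 0 := by
          rw [← this, hpair]
        have := Finset.sum_sub_distrib (s := Finset.Icc 1 k)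
          (f := fun j => q j * ℓ j) (g := fun j => p j * ℓ j)
        linarith [hdiff, this ▸ hdiff]
      rw [key]; exact hfeas k hk
  -- strict Jensen
  have hjensen : (ℓ i / 2) * Real.log (1 + p i) + (ℓ (i + 1) / 2) * Real.log (1 + p (i + 1))
      < (ℓ i / 2) * Real.log (1 + w) + (ℓ (i + 1) / 2) * Real.log (1 + w) := by
    have ha : (0:ℝ) < ℓ i / s := by positivity
    have hb : (0:ℝ) < ℓ (i + 1) / s := by positivity
    have hab : ℓ i / s + ℓ (i + 1) / s = 1 := by field_simp; exact hs.symm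
    have hx : (1 + p i) ∈ Set.Ioi (0:ℝ) := by simp; linarith
    have hy : (1 + p (i + 1)) ∈ Set.Ioi (0:ℝ) := by simp; linarith
    have hxy : (1 + p i) ≠ (1 + p (i + 1)) := by intro h; nlinarith
    have := strictConcaveOn_log_Ioi.2 hx hy hxy ha hb hab
    simp only [smul_eq_mul] at this
    have hcomb : ℓ i / s * (1 + p i) + ℓ (i + 1) / s * (1 + p (i + 1)) = 1 + w := by
      rw [hw]; field_simp; ring
    rw [hcomb] at this
    have h2 : (ℓ i / s) * Real.log (1 + p i) + (ℓ (i + 1) / s) * Real.log (1 + p (i + 1))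
        < (ℓ i / s + ℓ (i + 1) / s) * Real.log (1 + w) := by
      rw [hab]; linarith
    have hs2 : (0:ℝ) < s / 2 := by positivity
    have := mul_lt_mul_of_pos_left h2 hs2
    calc (ℓ i / 2) * Real.log (1 + p i) + (ℓ (i + 1) / 2) * Real.log (1 + p (i + 1))
        = (s / 2) * ((ℓ i / s) * Real.log (1 + p i) + (ℓ (i + 1) / s) * Real.log (1 + p (i + 1))) := by
          field_simp
      _ < (s / 2) * ((ℓ i / s + ℓ (i + 1) / s) * Real.log (1 + w)) := this
      _ = (ℓ i / 2) * Real.log (1 + w) + (ℓ (i + 1) / 2) * Real.log (1 + w) := by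
          field_simp
  -- objective strictly improves
  have hobj : (∑ j ∈ Finset.Icc 1 N, (ℓ j / 2) * Real.log (1 + p j))
      < ∑ j ∈ Finset.Icc 1 N, (ℓ j / 2) * Real.log (1 + q j) := by
    have hsub : ({i, i + 1} : Finset ℕ) ⊆ Finset.Icc 1 N := by
      intro j hj
      simp only [Finset.mem_insert, Finset.mem_singleton] at hj
      rcases hj with h | h <;> subst h <;> assumption
    have h0 : ∀ j ∈ Finset.Icc 1 N, j ∉ ({i, i + 1} : Finset ℕ) →
        (ℓ j / 2) * Real.log (1 + q j) - (ℓ j / 2) * Real.log (1 + p j) = 0 := by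
      intro j _ hj
      simp only [Finset.mem_insert, Finset.mem_singleton, not_or] at hj
      rw [hqother j hj.1 hj.2]; ring
    have hsum := Finset.sum_subset hsub h0
    have hpair : (0:ℝ) < ∑ j ∈ ({i, i + 1} : Finset ℕ),
        ((ℓ j / 2) * Real.log (1 + q j) - (ℓ j / 2) * Real.log (1 + p j)) := by
      rw [Finset.sum_pair (by omega : i ≠ i + 1), hqi, hqi1]
      linarith
    have hdiff : (0:ℝ) < ∑ j ∈ Finset.Icc 1 N,
        ((ℓ j / 2) * Real.log (1 + q j) - (ℓ j / 2) * Real.log (1 + p j)) := by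
      rw [← hsum]; exact hpair
    rw [Finset.sum_sub_distrib] at hdiff
    linarith
  exact absurd (hopt q hq0 hqfeas) (not_le.2 hobj)
end

section
/- If at the optimum of the single-battery problem the power strictly increases from epoch i to epoch i+1 (p*_i < p*_{i+1}), then the energy causality constraint at epoch i is tight: ∑_{j=1}^i p*_j ℓ_j = ∑_{j=0}^{i−1} E_j. -/
lemma log_sub_log_ge' {x y : ℝ} (hx : 0 < x) (hxy : x ≤ y) :
    (y - x) / y ≤ Real.log y - Real.log x := by
  have hy : 0 < y := lt_of_lt_of_le hx hxy
  have h := Real.log_le_sub_one_of_pos (div_pos hx hy)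
  rw [Real.log_div hx.ne' hy.ne'] at h
  have h2 : (y - x) / y = 1 - x / y := by field_simp
  linarith [h2]

lemma log_sub_log_le' {x y : ℝ} (hx : 0 < x) (hxy : x ≤ y) :
    Real.log y - Real.log x ≤ (y - x) / x := by
  have hy : 0 < y := lt_of_lt_of_le hx hxy
  have h := Real.log_le_sub_one_of_pos (div_pos hy hx)
  rw [Real.log_div hy.ne' hx.ne'] at h
  have h2 : (y - x) / x = y / x - 1 := by field_simp
  linarith [h2]

set_option maxHeartbeats 1000000 in
/-- If the optimal power strictly increases from epoch `i` to `i+1` in the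
single-battery problem, then the energy causality constraint at epoch `i` is tight. -/
theorem stmt12 (N : ℕ) (hN : 1 ≤ N) (ℓ : ℕ → ℝ) (hℓ : ∀ i ∈ Finset.Icc 1 N, 0 < ℓ i)
    (E : ℕ → ℝ) (hE : ∀ j, 0 ≤ E j)
    (p : ℕ → ℝ) (hp : ∀ i ∈ Finset.Icc 1 N, 0 ≤ p i)
    (hfeas : ∀ i ∈ Finset.Icc 1 N,
      (∑ j ∈ Finset.Icc 1 i, p j * ℓ j) ≤ ∑ j ∈ Finset.range i, E j)
    (hopt : ∀ q : ℕ → ℝ, (∀ i ∈ Finset.Icc 1 N, 0 ≤ q i) →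
      (∀ i ∈ Finset.Icc 1 N,
        (∑ j ∈ Finset.Icc 1 i, q j * ℓ j) ≤ ∑ j ∈ Finset.range i, E j) →
      (∑ i ∈ Finset.Icc 1 N, (ℓ i / 2) * Real.log (1 + q i))
        ≤ ∑ i ∈ Finset.Icc 1 N, (ℓ i / 2) * Real.log (1 + p i))
    (i : ℕ) (hi1 : 1 ≤ i) (hiN : i + 1 ≤ N) (hinc : p i < p (i + 1)) :
    (∑ j ∈ Finset.Icc 1 i, p j * ℓ j) = ∑ j ∈ Finset.range i, E j := by
  by_contra hne
  have hiI : i ∈ Finset.Icc 1 N := Finset.mem_Icc.mpr ⟨hi1, by omega⟩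
  have hi1I : i + 1 ∈ Finset.Icc 1 N := Finset.mem_Icc.mpr ⟨by omega, hiN⟩
  have ha : 0 < ℓ i := hℓ i hiI
  have hb : 0 < ℓ (i + 1) := hℓ (i + 1) hi1I
  set a := ℓ i with ha_def
  set b := ℓ (i + 1) with hb_def
  have hlt : (∑ j ∈ Finset.Icc 1 i, p j * ℓ j) < ∑ j ∈ Finset.range i, E j :=
    lt_of_le_of_ne (hfeas i hiI) hne
  set δ := (∑ j ∈ Finset.range i, E j) - (∑ j ∈ Finset.Icc 1 i, p j * ℓ j) with hδ_def
  have hδ : 0 < δ := by simp [hδ_def]; linarith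
  set d := p (i + 1) - p i with hd_def
  have hd : 0 < d := by simp [hd_def]; linarith
  set ε := min δ (d * (a * b) / (2 * (a + b))) with hε_def
  have hε : 0 < ε := lt_min hδ (by positivity)
  have hεδ : ε ≤ δ := min_le_left _ _
  have hgap : ε / a + ε / b ≤ d / 2 := by
    have h2 : ε ≤ d * (a * b) / (2 * (a + b)) := min_le_right _ _
    rw [div_add_div _ _ ha.ne' hb.ne', div_le_div_iff₀ (by positivity) (by norm_num)]
    rw [le_div_iff₀ (by positivity)] at h2
    nlinarith
  have hAB : p i + ε / a < p (i + 1) - ε / b := by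
    have : d / 2 < d := by linarith
    simp only [hd_def] at hgap ⊢
    linarith
  -- the perturbed schedule
  set q : ℕ → ℝ := fun j => if j = i then p i + ε / a
    else if j = i + 1 then p (i + 1) - ε / b else p j with hq_def
  have hqi : q i = p i + ε / a := by simp [hq_def]
  have hqi1 : q (i + 1) = p (i + 1) - ε / b := by simp [hq_def]
  have hqo : ∀ j, j ≠ i → j ≠ i + 1 → q j = p j := by
    intro j h1 h2; simp [hq_def, h1, h2]
  have hpi : 0 ≤ p i := hp i hiI
  have hεa : 0 < ε / a := by positivity
  have hεb : 0 < ε / b := by positivity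
  have hqnn : ∀ j ∈ Finset.Icc 1 N, 0 ≤ q j := by
    intro j hj
    by_cases h1 : j = i
    · subst h1; rw [hqi]; linarith
    by_cases h2 : j = i + 1
    · subst h2; rw [hqi1]; linarith
    · rw [hqo j h1 h2]; exact hp j hj
  have hqfeas : ∀ k ∈ Finset.Icc 1 N,
      (∑ j ∈ Finset.Icc 1 k, q j * ℓ j) ≤ ∑ j ∈ Finset.range k, E j := by
    intro k hk
    rcases lt_trichotomy k i with h | h | h
    · have heq : ∑ j ∈ Finset.Icc 1 k, q j * ℓ j = ∑ j ∈ Finset.Icc 1 k, p j * ℓ j := by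
        apply Finset.sum_congr rfl
        intro j hj
        have hj2 := (Finset.mem_Icc.mp hj).2
        rw [hqo j (by omega) (by omega)]
      rw [heq]; exact hfeas k hk
    · subst h
      have hsub : ∑ j ∈ Finset.Icc 1 k, (q j * ℓ j - p j * ℓ j) = ε := by
        rw [Finset.sum_eq_single_of_mem k (Finset.mem_Icc.mpr ⟨hi1, le_refl k⟩)]
        · rw [hqi]; field_simp; rw [ha_def]; ring
        · intro j hj hjk
          have hj2 := (Finset.mem_Icc.mp hj).2
          rw [hqo j hjk (by omega)]; ring
      rw [Finset.sum_sub_distrib] at hsub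
      have := hfeas k hk
      linarith [hεδ]
    · have hpairsub : ({i, i + 1} : Finset ℕ) ⊆ Finset.Icc 1 k := by
        intro j hj
        simp only [Finset.mem_insert, Finset.mem_singleton] at hj
        rcases hj with rfl | rfl <;> exact Finset.mem_Icc.mpr ⟨by omega, by omega⟩
      have hsub : ∑ j ∈ Finset.Icc 1 k, (q j * ℓ j - p j * ℓ j) = 0 := by
        rw [← Finset.sum_subset hpairsub]
        · rw [Finset.sum_pair (by omega : i ≠ i + 1)]
          rw [hqi, hqi1]
          field_simp
          rw [ha_def, hb_def]; ring
        · intro j _ hj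
          simp only [Finset.mem_insert, Finset.mem_singleton, not_or] at hj
          rw [hqo j hj.1 hj.2]; ring
      rw [Finset.sum_sub_distrib] at hsub
      have := hfeas k hk
      linarith
  have hobj := hopt q hqnn hqfeas
  -- compute the objective difference
  have hpairsub : ({i, i + 1} : Finset ℕ) ⊆ Finset.Icc 1 N := by
    intro j hj
    simp only [Finset.mem_insert, Finset.mem_singleton] at hj
    rcases hj with rfl | rfl <;> exact Finset.mem_Icc.mpr ⟨by omega, by omega⟩
  have hdiff : ∑ j ∈ Finset.Icc 1 N,
      ((ℓ j / 2) * Real.log (1 + q j) - (ℓ j / 2) * Real.log (1 + p j))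
      = (a / 2) * (Real.log (1 + (p i + ε / a)) - Real.log (1 + p i))
        + (b / 2) * (Real.log (1 + (p (i + 1) - ε / b)) - Real.log (1 + p (i + 1))) := by
    rw [← Finset.sum_subset hpairsub]
    · rw [Finset.sum_pair (by omega : i ≠ i + 1), hqi, hqi1]
      ring
    · intro j _ hj
      simp only [Finset.mem_insert, Finset.mem_singleton, not_or] at hj
      rw [hqo j hj.1 hj.2]; ring
  -- bound the difference strictly below by 0
  set A := 1 + (p i + ε / a) with hA_def
  set B := 1 + (p (i + 1) - ε / b) with hB_def
  have hx0 : (0:ℝ) < 1 + p i := by linarith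
  have hA : 0 < A := by simp [hA_def]; linarith
  have hABlt : A < B := by simp [hA_def, hB_def]; linarith
  have hB : 0 < B := lt_trans hA hABlt
  have hBy : B ≤ 1 + p (i + 1) := by simp [hB_def]; linarith
  have g1 : (A - (1 + p i)) / A ≤ Real.log A - Real.log (1 + p i) :=
    log_sub_log_ge' hx0 (by simp [hA_def]; linarith)
  have g2 : Real.log (1 + p (i + 1)) - Real.log B ≤ ((1 + p (i + 1)) - B) / B :=
    log_sub_log_le' hB hBy
  have e1 : (A - (1 + p i)) / A = (ε / a) / A := by rw [hA_def]; ring_nf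
  have e2 : ((1 + p (i + 1)) - B) / B = (ε / b) / B := by rw [hB_def]; ring_nf
  have hfrac : ε / (2 * B) < ε / (2 * A) := by
    apply div_lt_div_of_pos_left hε (by positivity) (by linarith)
  have hG1 : ε / (2 * A) ≤ (a / 2) * (Real.log A - Real.log (1 + p i)) := by
    rw [e1] at g1
    have : (a / 2) * ((ε / a) / A) = ε / (2 * A) := by field_simp
    nlinarith [g1, ha]
  have hG2 : -(ε / (2 * B)) ≤ (b / 2) * (Real.log B - Real.log (1 + p (i + 1))) := by
    rw [e2] at g2
    have : (b / 2) * ((ε / b) / B) = ε / (2 * B) := by field_simp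
    nlinarith [g2, hb]
  have hpos : 0 < (a / 2) * (Real.log A - Real.log (1 + p i))
      + (b / 2) * (Real.log B - Real.log (1 + p (i + 1))) := by linarith
  rw [Finset.sum_sub_distrib] at hdiff
  rw [hA_def, hB_def] at hpos
  linarith
end

section
/- Strict concavity implies uniqueness of optimal total powers: if (p^sc, p^b, δ) and (q^sc, q^b, σ) are both optimal for the hybrid-storage throughput maximization problem, then p^sc_i + p^b_i = q^sc_i + q^b_i for every epoch i. -/
/-- Feasibility for the hybrid-storage problem (constraints (4)-(7) of the paper):
epochs are indexed `1..N`, arrivals `E^sc_j, E^b_j` for `0 ≤ j ≤ N-1`, `δ 0 = 0`. -/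
def HybridFeasible (N : ℕ) (ℓ Esc Eb : ℕ → ℝ) (Emax η : ℝ)
    (psc pb δ : ℕ → ℝ) : Prop :=
  (∀ j, 0 ≤ psc j) ∧ (∀ j, 0 ≤ pb j) ∧ (∀ j, 0 ≤ δ j) ∧ δ 0 = 0 ∧
  ∀ i ∈ Finset.Icc 1 N,
    (∑ j ∈ Finset.Icc 1 i, (psc j + δ j) * ℓ j) ≤ (∑ j ∈ Finset.range i, Esc j) ∧
    (∑ j ∈ Finset.range (i + 1), Esc j)
        - (∑ j ∈ Finset.Icc 1 i, (psc j + δ j) * ℓ j) ≤ Emax ∧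
    (∑ j ∈ Finset.Icc 1 i, pb j * ℓ j)
        ≤ ∑ j ∈ Finset.range i, η * (Eb j + δ j * ℓ j)

/-- Objective of the hybrid-storage problem. -/
noncomputable def HybridObj (N : ℕ) (ℓ psc pb : ℕ → ℝ) : ℝ :=
  ∑ i ∈ Finset.Icc 1 N, (ℓ i / 2) * Real.log (1 + psc i + pb i)

/-- Uniqueness of optimal total powers: any two maximizers of the hybrid-storage
problem have the same total power `psc i + pb i` in every epoch. -/
theorem stmt13 (N : ℕ) (hN : 1 ≤ N) (ℓ : ℕ → ℝ) (hℓ : ∀ i ∈ Finset.Icc 1 N, 0 < ℓ i)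
    (Esc Eb : ℕ → ℝ) (hEsc : ∀ j, 0 ≤ Esc j) (hEb : ∀ j, 0 ≤ Eb j)
    (Emax : ℝ) (hEmax : 0 < Emax) (η : ℝ) (hη0 : 0 ≤ η) (hη1 : η < 1)
    (psc pb δ qsc qb σ : ℕ → ℝ)
    (hp : HybridFeasible N ℓ Esc Eb Emax η psc pb δ)
    (hq : HybridFeasible N ℓ Esc Eb Emax η qsc qb σ)
    (hpopt : ∀ rsc rb ρ, HybridFeasible N ℓ Esc Eb Emax η rsc rb ρ →
      HybridObj N ℓ rsc rb ≤ HybridObj N ℓ psc pb)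
    (hqopt : ∀ rsc rb ρ, HybridFeasible N ℓ Esc Eb Emax η rsc rb ρ →
      HybridObj N ℓ rsc rb ≤ HybridObj N ℓ qsc qb) :
    ∀ i ∈ Finset.Icc 1 N, psc i + pb i = qsc i + qb i := by
  intro i hi
  by_contra hne
  obtain ⟨hp1, hp2, hp3, hp4, hp5⟩ := hp
  obtain ⟨hq1, hq2, hq3, hq4, hq5⟩ := hq
  set rsc : ℕ → ℝ := fun j => (psc j + qsc j) / 2 with hrsc
  set rb : ℕ → ℝ := fun j => (pb j + qb j) / 2 with hrb
  set ρ : ℕ → ℝ := fun j => (δ j + σ j) / 2 with hρ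
  have hr : HybridFeasible N ℓ Esc Eb Emax η rsc rb ρ := by
    refine ⟨fun j => by have := hp1 j; have := hq1 j; simp only [hrsc]; linarith,
      fun j => by have := hp2 j; have := hq2 j; simp only [hrb]; linarith,
      fun j => by have := hp3 j; have := hq3 j; simp only [hρ]; linarith,
      by simp [hρ, hp4, hq4], ?_⟩
    intro k hk
    obtain ⟨hpa, hpb, hpc⟩ := hp5 k hk
    obtain ⟨hqa, hqb, hqc⟩ := hq5 k hk
    have e1 : ∑ j ∈ Finset.Icc 1 k, (rsc j + ρ j) * ℓ j
        = ((∑ j ∈ Finset.Icc 1 k, (psc j + δ j) * ℓ j)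
          + ∑ j ∈ Finset.Icc 1 k, (qsc j + σ j) * ℓ j) / 2 := by
      rw [← Finset.sum_add_distrib, Finset.sum_div]
      exact Finset.sum_congr rfl (fun j _ => by simp only [hrsc, hρ]; ring)
    have e2 : ∑ j ∈ Finset.Icc 1 k, rb j * ℓ j
        = ((∑ j ∈ Finset.Icc 1 k, pb j * ℓ j)
          + ∑ j ∈ Finset.Icc 1 k, qb j * ℓ j) / 2 := by
      rw [← Finset.sum_add_distrib, Finset.sum_div]
      exact Finset.sum_congr rfl (fun j _ => by simp only [hrb]; ring)
    have e3 : ∑ j ∈ Finset.range k, η * (Eb j + ρ j * ℓ j)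
        = ((∑ j ∈ Finset.range k, η * (Eb j + δ j * ℓ j))
          + ∑ j ∈ Finset.range k, η * (Eb j + σ j * ℓ j)) / 2 := by
      rw [← Finset.sum_add_distrib, Finset.sum_div]
      exact Finset.sum_congr rfl (fun j _ => by simp only [hρ]; ring)
    refine ⟨by rw [e1]; linarith, by rw [e1]; linarith, by rw [e2, e3]; linarith⟩
  have hObjEq : HybridObj N ℓ psc pb = HybridObj N ℓ qsc qb :=
    le_antisymm (hqopt psc pb δ ⟨hp1, hp2, hp3, hp4, hp5⟩)
      (hpopt qsc qb σ ⟨hq1, hq2, hq3, hq4, hq5⟩)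
  have hrle := hpopt rsc rb ρ hr
  -- strict concavity argument
  have key : ∑ j ∈ Finset.Icc 1 N,
      ((ℓ j / 2) * Real.log (1 + psc j + pb j) + (ℓ j / 2) * Real.log (1 + qsc j + qb j)) / 2
      < ∑ j ∈ Finset.Icc 1 N, (ℓ j / 2) * Real.log (1 + rsc j + rb j) := by
    have step : ∀ j ∈ Finset.Icc 1 N, (1 + psc j + pb j ≠ 1 + qsc j + qb j) →
        ((ℓ j / 2) * Real.log (1 + psc j + pb j)
          + (ℓ j / 2) * Real.log (1 + qsc j + qb j)) / 2
        < (ℓ j / 2) * Real.log (1 + rsc j + rb j) := by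
      intro j hj hnej
      have ha : (1 : ℝ) + psc j + pb j ∈ Set.Ioi (0:ℝ) := by
        have := hp1 j; have := hp2 j; simp only [Set.mem_Ioi]; linarith
      have hb : (1 : ℝ) + qsc j + qb j ∈ Set.Ioi (0:ℝ) := by
        have := hq1 j; have := hq2 j; simp only [Set.mem_Ioi]; linarith
      have hc := strictConcaveOn_log_Ioi.2 ha hb hnej (by norm_num : (0:ℝ) < 1/2)
        (by norm_num : (0:ℝ) < 1/2) (by norm_num)
      simp only [smul_eq_mul] at hc
      have hmid : 1 + rsc j + rb j
          = 1/2 * (1 + psc j + pb j) + 1/2 * (1 + qsc j + qb j) := by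
        simp only [hrsc, hrb]; ring
      rw [hmid]
      have hℓj := hℓ j hj
      nlinarith [hc, hℓj]
    have wk : ∀ j ∈ Finset.Icc 1 N,
        ((ℓ j / 2) * Real.log (1 + psc j + pb j)
          + (ℓ j / 2) * Real.log (1 + qsc j + qb j)) / 2
        ≤ (ℓ j / 2) * Real.log (1 + rsc j + rb j) := by
      intro j hj
      by_cases h : 1 + psc j + pb j = 1 + qsc j + qb j
      · have hmid : 1 + rsc j + rb j = 1 + psc j + pb j := by
          simp only [hrsc, hrb]; linarith
        rw [hmid, ← h]; linarith [le_refl ((ℓ j / 2) * Real.log (1 + psc j + pb j))]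
      · exact (step j hj h).le
    refine Finset.sum_lt_sum wk ⟨i, hi, step i hi (fun h => hne (by linarith))⟩
  have hsum : ∑ j ∈ Finset.Icc 1 N,
      ((ℓ j / 2) * Real.log (1 + psc j + pb j) + (ℓ j / 2) * Real.log (1 + qsc j + qb j)) / 2
      = (HybridObj N ℓ psc pb + HybridObj N ℓ qsc qb) / 2 := by
    rw [HybridObj, HybridObj, ← Finset.sum_add_distrib, Finset.sum_div]
  have : HybridObj N ℓ psc pb < HybridObj N ℓ rsc rb := by
    rw [HybridObj]
    calc HybridObj N ℓ psc pb
        = (HybridObj N ℓ psc pb + HybridObj N ℓ qsc qb) / 2 := by rw [← hObjEq]; ring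
      _ = _ := hsum.symm
      _ < _ := key
  linarith
end

section
/- Tightness of the final causality constraint at the optimum: any maximizer (p^sc, p^b, δ) of the hybrid-storage throughput problem uses all drainable energy, i.e., ∑_{j=1}^N (p^sc_j + δ_j)ℓ_j = ∑_{j=0}^{N−1} E^sc_j and ∑_{j=1}^N p^b_j ℓ_j = ∑_{j=0}^{N−1} η(E^b_j + δ_j ℓ_j), provided δ_N = 0 is imposed and the arrivals are such that ∑_{j=0}^{N−1}(E^sc_j + η E^b_j) > 0. -/
/-- Feasibility for the hybrid-storage problem (constraints (4)-(7) of the paper). -/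
def HybFeas (N : ℕ) (ℓ Esc Eb : ℕ → ℝ) (Emax η : ℝ) (psc pb δ : ℕ → ℝ) : Prop :=
  (∀ j, 0 ≤ psc j) ∧ (∀ j, 0 ≤ pb j) ∧ (∀ j, 0 ≤ δ j) ∧ δ 0 = 0 ∧
  ∀ i ∈ Finset.Icc 1 N,
    (∑ j ∈ Finset.Icc 1 i, (psc j + δ j) * ℓ j) ≤ (∑ j ∈ Finset.range i, Esc j) ∧
    (∑ j ∈ Finset.range (i + 1), Esc j)
        - (∑ j ∈ Finset.Icc 1 i, (psc j + δ j) * ℓ j) ≤ Emax ∧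
    (∑ j ∈ Finset.Icc 1 i, pb j * ℓ j)
        ≤ ∑ j ∈ Finset.range i, η * (Eb j + δ j * ℓ j)

/-- A sum over `Icc 1 i` with `i < N` is unchanged by modifying the value at `N`. -/
lemma sum_same (N i : ℕ) (hi : i < N) (g f : ℕ → ℝ) :
    ∑ j ∈ Finset.Icc 1 i, (if j = N then g j else f j)
      = ∑ j ∈ Finset.Icc 1 i, f j := by
  refine Finset.sum_congr rfl fun j hj => ?_
  have : j ≤ i := (Finset.mem_Icc.mp hj).2
  rw [if_neg (by omega)]

/-- Shifting the value at `N` by `c` shifts the sum by `c * ℓ N`. -/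
lemma sum_shift (N : ℕ) (hN : 1 ≤ N) (ℓ f : ℕ → ℝ) (c : ℝ) :
    ∑ j ∈ Finset.Icc 1 N, (if j = N then f j + c else f j) * ℓ j
      = (∑ j ∈ Finset.Icc 1 N, f j * ℓ j) + c * ℓ N := by
  have h : ∀ j ∈ Finset.Icc 1 N, (if j = N then f j + c else f j) * ℓ j
      = f j * ℓ j + (if j = N then c * ℓ j else 0) := by
    intro j hj; split_ifs <;> ring
  rw [Finset.sum_congr rfl h, Finset.sum_add_distrib, Finset.sum_ite_eq' (Finset.Icc 1 N) N]
  simp [Finset.mem_Icc, hN]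

/-- Tightness of the final causality constraints: any maximizer with `δ N = 0`
uses all drainable energy in both the SC and the battery. -/
theorem stmt17 (N : ℕ) (hN : 1 ≤ N) (ℓ : ℕ → ℝ) (hℓ : ∀ j ∈ Finset.Icc 1 N, 0 < ℓ j)
    (Esc Eb : ℕ → ℝ) (hEsc : ∀ j, 0 ≤ Esc j) (hEb : ∀ j, 0 ≤ Eb j)
    (Emax : ℝ) (hEmax : ∀ j ∈ Finset.range N, Esc j ≤ Emax)
    (η : ℝ) (hη0 : 0 < η) (hη1 : η < 1)
    (hpos : 0 < ∑ j ∈ Finset.range N, (Esc j + η * Eb j))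
    (psc pb δ : ℕ → ℝ)
    (hfeas : HybFeas N ℓ Esc Eb Emax η psc pb δ) (hδN : δ N = 0)
    (hopt : ∀ qsc qb σ, HybFeas N ℓ Esc Eb Emax η qsc qb σ → σ N = 0 →
      (∑ i ∈ Finset.Icc 1 N, (ℓ i / 2) * Real.log (1 + qsc i + qb i))
        ≤ ∑ i ∈ Finset.Icc 1 N, (ℓ i / 2) * Real.log (1 + psc i + pb i)) :
    (∑ j ∈ Finset.Icc 1 N, (psc j + δ j) * ℓ j) = (∑ j ∈ Finset.range N, Esc j) ∧
    (∑ j ∈ Finset.Icc 1 N, pb j * ℓ j)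
      = ∑ j ∈ Finset.range N, η * (Eb j + δ j * ℓ j) := by
  obtain ⟨hpsc, hpb, hδ, hδ0, hcon⟩ := hfeas
  have hNmem : N ∈ Finset.Icc 1 N := by simp [hN]
  have hℓN : 0 < ℓ N := hℓ N hNmem
  obtain ⟨h4, h5, h7⟩ := hcon N hNmem
  constructor
  · -- SC constraint tight
    by_contra hne
    have hlt : (∑ j ∈ Finset.Icc 1 N, (psc j + δ j) * ℓ j)
        < ∑ j ∈ Finset.range N, Esc j := lt_of_le_of_ne h4 hne
    set S := ∑ j ∈ Finset.Icc 1 N, (psc j + δ j) * ℓ j with hS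
    set A := ∑ j ∈ Finset.range N, Esc j with hA
    set ε := (A - S) / ℓ N with hε
    have hεpos : 0 < ε := div_pos (by linarith) hℓN
    set qsc := fun j => if j = N then psc j + ε else psc j with hq
    have hεℓ : ε * ℓ N = A - S := div_mul_cancel₀ _ (ne_of_gt hℓN)
    have hrw : ∀ j, qsc j + δ j = if j = N then (psc j + δ j) + ε else (psc j + δ j) := by
      intro j; simp only [hq]; split_ifs <;> ring
    have hfeas' : HybFeas N ℓ Esc Eb Emax η qsc pb δ := by
      refine ⟨fun j => ?_, hpb, hδ, hδ0, fun i hi => ?_⟩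
      · simp only [hq]; split_ifs
        · have := hpsc j; linarith
        · exact hpsc j
      · obtain ⟨g4, g5, g7⟩ := hcon i hi
        simp only [hrw]
        rcases lt_or_eq_of_le (Finset.mem_Icc.mp hi).2 with h | h
        · rw [show (∑ j ∈ Finset.Icc 1 i,
              (if j = N then (psc j + δ j) + ε else psc j + δ j) * ℓ j)
              = ∑ j ∈ Finset.Icc 1 i, (psc j + δ j) * ℓ j from by
              refine Finset.sum_congr rfl fun j hj => ?_
              have : j ≤ i := (Finset.mem_Icc.mp hj).2
              rw [if_neg (by omega)]]
          exact ⟨g4, g5, g7⟩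
        · rw [h, sum_shift N hN ℓ (fun j => psc j + δ j) ε, ← hS, hεℓ]
          refine ⟨by linarith, by linarith, h ▸ g7⟩
    have hle := hopt qsc pb δ hfeas' hδN
    have hgt : (∑ i ∈ Finset.Icc 1 N, (ℓ i / 2) * Real.log (1 + psc i + pb i))
        < ∑ i ∈ Finset.Icc 1 N, (ℓ i / 2) * Real.log (1 + qsc i + pb i) := by
      refine Finset.sum_lt_sum (fun i hi => ?_) ⟨N, hNmem, ?_⟩
      · have hℓi := hℓ i hi
        have : Real.log (1 + psc i + pb i) ≤ Real.log (1 + qsc i + pb i) := by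
          apply Real.log_le_log (by have := hpsc i; have := hpb i; linarith)
          simp only [hq]; split_ifs <;> nlinarith [hpsc i]
        nlinarith
      · have hlog : Real.log (1 + psc N + pb N) < Real.log (1 + qsc N + pb N) := by
          apply Real.log_lt_log (by have := hpsc N; have := hpb N; linarith)
          simp only [hq, if_pos rfl]; linarith
        nlinarith
    linarith
  · -- battery constraint tight
    by_contra hne
    have hlt : (∑ j ∈ Finset.Icc 1 N, pb j * ℓ j)
        < ∑ j ∈ Finset.range N, η * (Eb j + δ j * ℓ j) := lt_of_le_of_ne h7 hne
    set S := ∑ j ∈ Finset.Icc 1 N, pb j * ℓ j with hS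
    set B := ∑ j ∈ Finset.range N, η * (Eb j + δ j * ℓ j) with hB
    set ε := (B - S) / ℓ N with hε
    have hεpos : 0 < ε := div_pos (by linarith) hℓN
    set qb := fun j => if j = N then pb j + ε else pb j with hq
    have hεℓ : ε * ℓ N = B - S := div_mul_cancel₀ _ (ne_of_gt hℓN)
    have hfeas' : HybFeas N ℓ Esc Eb Emax η psc qb δ := by
      refine ⟨hpsc, fun j => ?_, hδ, hδ0, fun i hi => ?_⟩
      · simp only [hq]; split_ifs
        · have := hpb j; linarith
        · exact hpb j
      · obtain ⟨g4, g5, g7⟩ := hcon i hi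
        refine ⟨g4, g5, ?_⟩
        rcases lt_or_eq_of_le (Finset.mem_Icc.mp hi).2 with h | h
        · rw [show (∑ j ∈ Finset.Icc 1 i, qb j * ℓ j)
              = ∑ j ∈ Finset.Icc 1 i, pb j * ℓ j from by
              refine Finset.sum_congr rfl fun j hj => ?_
              have : j ≤ i := (Finset.mem_Icc.mp hj).2
              simp only [hq]; rw [if_neg (by omega)]]
          exact g7
        · rw [h]; simp only [hq]
          rw [sum_shift N hN ℓ pb ε, ← hS, hεℓ]
          linarith
    have hle := hopt psc qb δ hfeas' hδN
    have hgt : (∑ i ∈ Finset.Icc 1 N, (ℓ i / 2) * Real.log (1 + psc i + pb i))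
        < ∑ i ∈ Finset.Icc 1 N, (ℓ i / 2) * Real.log (1 + psc i + qb i) := by
      refine Finset.sum_lt_sum (fun i hi => ?_) ⟨N, hNmem, ?_⟩
      · have hℓi := hℓ i hi
        have : Real.log (1 + psc i + pb i) ≤ Real.log (1 + psc i + qb i) := by
          apply Real.log_le_log (by have := hpsc i; have := hpb i; linarith)
          simp only [hq]; split_ifs <;> nlinarith [hpb i]
        nlinarith
      · have hlog : Real.log (1 + psc N + pb N) < Real.log (1 + psc N + qb N) := by
          apply Real.log_lt_log (by have := hpsc N; have := hpb N; linarith)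
          simp only [hq, if_pos rfl]; linarith
        nlinarith
    linarith
end
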